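/- arXiv:1902.00721 — 2 statements merged into one kernel-verified Lean document; each statement's English description precedes it below -/
import Mathlib

section
/- In the q-shuffle algebra V, for all k, ℓ ∈ ℕ: [W_{−k}, W_{ℓ+1}]_⋆ + [W_{k+1}, W_{−ℓ}]_⋆ = 0, where [a,b]_⋆ = a⋆b − b⋆a. -/
noncomputable section

/-- Words in the letters `x` (= `false`) and `y` (= `true`). -/
abbrev Wd := List Bool

/-- The underlying vector space of the free algebra `F⟨x,y⟩`,
with the words as a basis. -/
abbrev V (F : Type*) [Field F] := Wd →₀ F

/-- The pairing `⟨u,v⟩` on letters: `2` if equal, `-2` if distinct. -/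
def pr (a b : Bool) : ℤ := if a = b then 2 else -2

/-- `⟨u₁,b⟩ + ⟨u₂,b⟩ + ⋯ + ⟨u_r,b⟩` for a word `u` and a letter `b`. -/
def wsum (u : Wd) (b : Bool) : ℤ := (u.map fun a => pr a b).sum

variable {F : Type*} [Field F]

/-- Left multiplication by a letter, in the free (concatenation) algebra. -/
def lmul (a : Bool) (f : V F) : V F := Finsupp.mapDomain (fun w => a :: w) f

/-- The `q`-shuffle product of two words (as an element of `V F`), defined by
Rosso's recursion
`u ⋆ v = u₁((u₂⋯u_r) ⋆ v) + q^{⟨u₁,v₁⟩+⋯+⟨u_r,v₁⟩} v₁(u ⋆ (v₂⋯v_s))`. -/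
def sh (q : F) : Wd → Wd → V F
  | [], v => Finsupp.single v 1
  | u@(_ :: _), [] => Finsupp.single u 1
  | a :: u', b :: v' =>
      lmul a (sh q u' (b :: v')) +
        q ^ wsum (a :: u') b • lmul b (sh q (a :: u') v')
  termination_by u v => u.length + v.length
  decreasing_by all_goals (simp only [List.length_cons]; omega)

/-- The `q`-shuffle product on `V F`, extended bilinearly from words. -/
def st (q : F) (f g : V F) : V F :=
  f.sum fun u cu => g.sum fun v cv => (cu * cv) • sh q u v

/-- The concatenation (free-algebra) product on `V F`. -/
def cm (f g : V F) : V F :=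
  f.sum fun u cu => g.sum fun v cv => Finsupp.single (u ++ v) (cu * cv)

/-- Powers with respect to the concatenation product. -/
def cpow (f : V F) : ℕ → V F
  | 0 => Finsupp.single [] 1
  | n + 1 => cm f (cpow f n)

/-- The alternating word `W_{-k} = xyx⋯x` of length `2k+1`. -/
def altX : ℕ → Wd
  | 0 => [false]
  | k + 1 => false :: true :: altX k

/-- The alternating word `W_{k+1} = yxy⋯y` of length `2k+1`. -/
def altY : ℕ → Wd
  | 0 => [true]
  | k + 1 => true :: false :: altY k

/-- The alternating word `G_k = (yx)^k`. -/
def gw : ℕ → Wd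
  | 0 => []
  | k + 1 => true :: false :: gw k

/-- The alternating word `G̃_k = (xy)^k`. -/
def gtw : ℕ → Wd
  | 0 => []
  | k + 1 => false :: true :: gtw k

/-- `W_{-k}` as an element of `V F`. -/
def Wm (F : Type*) [Field F] (k : ℕ) : V F := Finsupp.single (altX k) 1

/-- `W_{k+1}` as an element of `V F`. -/
def Wp (F : Type*) [Field F] (k : ℕ) : V F := Finsupp.single (altY k) 1

/-- `G_k` as an element of `V F`. -/
def Gn (F : Type*) [Field F] (k : ℕ) : V F := Finsupp.single (gw k) 1

/-- `G̃_k` as an element of `V F`. -/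
def Gt (F : Type*) [Field F] (k : ℕ) : V F := Finsupp.single (gtw k) 1

lemma sh_nil (q : F) (v : Wd) : sh q [] v = Finsupp.single v 1 := by rw [sh]
lemma sh_cons_nil (q : F) (a : Bool) (u : Wd) : sh q (a::u) [] = Finsupp.single (a::u) 1 := by rw [sh]
lemma sh_cons (q : F) (a : Bool) (u : Wd) (b : Bool) (v : Wd) :
    sh q (a::u) (b::v) = lmul a (sh q u (b::v)) + q ^ wsum (a::u) b • lmul b (sh q (a::u) v) := by
  rw [sh]
section Infra
variable {F : Type*} [Field F]

lemma gw_succ (k : ℕ) : gw (k+1) = true :: false :: gw k := rfl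
lemma gtw_succ (k : ℕ) : gtw (k+1) = false :: true :: gtw k := rfl
lemma altX_eq (k : ℕ) : altX k = false :: gw k := by
  induction k with
  | zero => rfl
  | succ k ih => show false :: true :: altX k = _; rw [ih]; rfl
lemma altY_eq (l : ℕ) : altY l = true :: gtw l := by
  induction l with
  | zero => rfl
  | succ l ih => show true :: false :: altY l = _; rw [ih]; rfl
lemma gw_eq (k : ℕ) : gw (k+1) = true :: altX k := by rw [altX_eq]; rfl
lemma gtw_eq (l : ℕ) : gtw (l+1) = false :: altY l := by rw [altY_eq]; rfl

lemma map_not_gw (k : ℕ) : (gw k).map not = gtw k := by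
  induction k with
  | zero => rfl
  | succ k ih => show not true :: not false :: (gw k).map not = _; rw [ih]; rfl
lemma map_not_gtw (k : ℕ) : (gtw k).map not = gw k := by
  induction k with
  | zero => rfl
  | succ k ih => show not false :: not true :: (gtw k).map not = _; rw [ih]; rfl
lemma map_not_altX (k : ℕ) : (altX k).map not = altY k := by
  rw [altX_eq, altY_eq]; show not false :: _ = _; rw [map_not_gw]; rfl
lemma map_not_altY (l : ℕ) : (altY l).map not = altX l := by
  rw [altX_eq, altY_eq]; show not true :: _ = _; rw [map_not_gtw]; rfl

lemma wsum_nil (b : Bool) : wsum [] b = 0 := rfl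
lemma wsum_cons (a : Bool) (u : Wd) (b : Bool) : wsum (a::u) b = pr a b + wsum u b := by
  simp [wsum]
lemma wsum_gw (k : ℕ) (b : Bool) : wsum (gw k) b = 0 := by
  induction k with
  | zero => rfl
  | succ k ih => rw [gw_succ, wsum_cons, wsum_cons, ih]; cases b <;> simp [pr]
lemma wsum_altX_t (k : ℕ) : wsum (altX k) true = -2 := by
  rw [altX_eq, wsum_cons, wsum_gw]; simp [pr]
lemma wsum_altX_f (k : ℕ) : wsum (altX k) false = 2 := by
  rw [altX_eq, wsum_cons, wsum_gw]; simp [pr]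

lemma lmul_single (a : Bool) (w : Wd) (c : F) :
    lmul a (Finsupp.single w c) = Finsupp.single (a::w) c := by
  simp [lmul, Finsupp.mapDomain_single]
lemma lmul_add (a : Bool) (f g : V F) : lmul a (f + g) = lmul a f + lmul a g := by
  simp [lmul, Finsupp.mapDomain_add]
lemma lmul_smul (a : Bool) (c : F) (f : V F) : lmul a (c • f) = c • lmul a f := by
  simp [lmul, Finsupp.mapDomain_smul]
lemma lmul_sub (a : Bool) (f g : V F) : lmul a (f - g) = lmul a f - lmul a g := by
  rw [sub_eq_add_neg, sub_eq_add_neg, lmul_add, ← neg_one_smul F g, lmul_smul, neg_one_smul]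

def sg : V F → V F := Finsupp.mapDomain (List.map not)
lemma sg_single (w : Wd) (c : F) : sg (Finsupp.single w c) = Finsupp.single (w.map not) c := by
  simp [sg, Finsupp.mapDomain_single]
lemma sg_add (f g : V F) : sg (f + g) = sg f + sg g := by simp [sg, Finsupp.mapDomain_add]
lemma sg_smul (c : F) (f : V F) : sg (c • f) = c • sg f := by simp [sg, Finsupp.mapDomain_smul]
lemma sg_sub (f g : V F) : sg (f - g) = sg f - sg g := by
  rw [sub_eq_add_neg, sub_eq_add_neg, sg_add, ← neg_one_smul F g, sg_smul, neg_one_smul]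
lemma sg_lmul (a : Bool) (f : V F) : sg (lmul a f) = lmul (!a) (sg f) := by
  simp only [sg, lmul, ← Finsupp.mapDomain_comp]
  congr 1
lemma sg_sg (f : V F) : sg (sg f) = f := by
  simp only [sg, ← Finsupp.mapDomain_comp]
  have : (List.map not ∘ List.map not) = (id : Wd → Wd) := by
    funext w; simp [Function.comp, List.map_map, Function.comp_def]
  rw [this, Finsupp.mapDomain_id]

lemma pr_not (a b : Bool) : pr (!a) (!b) = pr a b := by cases a <;> cases b <;> rfl
lemma wsum_map_not (u : Wd) (b : Bool) : wsum (u.map not) (!b) = wsum u b := by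
  induction u with
  | nil => rfl
  | cons a u ih => show wsum ((!a) :: u.map not) (!b) = _; rw [wsum_cons, wsum_cons, ih, pr_not]

lemma sg_sh (q : F) : ∀ (n : ℕ) (u v : Wd), u.length + v.length ≤ n →
    sg (sh q u v) = sh q (u.map not) (v.map not) := by
  intro n
  induction n with
  | zero =>
    intro u v h
    match u, v with
    | [], [] => simp only [List.map_nil]; rw [sh_nil, sg_single]; rfl
    | [], _::_ => simp at h
    | _::_, _ => simp at h
  | succ n ih =>
    intro u v h
    match u, v with
    | [], v => simp only [List.map_nil]; rw [sh_nil, sh_nil, sg_single]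
    | a::u, [] => simp only [List.map_nil, List.map_cons]; rw [sh_cons_nil, sh_cons_nil, sg_single]; rfl
    | a::u, b::v =>
      rw [sh_cons, sg_add, sg_smul, sg_lmul, sg_lmul,
        ih u (b::v) (by simp at h ⊢; omega), ih (a::u) v (by simp at h ⊢; omega)]
      show _ = sh q ((!a) :: u.map not) ((!b) :: v.map not)
      rw [sh_cons]
      have : wsum ((!a) :: u.map not) (!b) = wsum (a::u) b := by
        have := wsum_map_not (a::u) b; simpa using this
      rw [this]
      rfl
end Infra
section PQRS
variable {F : Type*} [Field F]

lemma zpow_m2 (q : F) : q ^ (-2 : ℤ) = (q^2)⁻¹ := by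
  rw [zpow_neg, zpow_two, sq]
lemma zpow_p2 (q : F) : q ^ (2 : ℤ) = q^2 := by rw [zpow_two, sq]

def Pf (q : F) (k l : ℕ) : V F := sh q (altX k) (altY l)
def Qf (q : F) (k l : ℕ) : V F := sh q (gw k) (altY l)
def Rf (q : F) (k l : ℕ) : V F := sh q (altX k) (gtw l)
def Sf (q : F) (k l : ℕ) : V F := sh q (gw k) (gtw l)

lemma r1 (q : F) (k l : ℕ) :
    Pf q k l = lmul false (Qf q k l) + (q^2)⁻¹ • lmul true (Rf q k l) := by
  unfold Pf Qf Rf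
  conv_lhs => rw [altX_eq, altY_eq, sh_cons]
  rw [← altX_eq, ← altY_eq, wsum_altX_t, zpow_m2]

lemma r2 (q : F) (k l : ℕ) :
    Qf q (k+1) l = lmul true (Pf q k l) + lmul true (Sf q (k+1) l) := by
  unfold Pf Qf Sf
  conv_lhs => rw [gw_eq, altY_eq, sh_cons]
  rw [← gw_eq, ← altY_eq, wsum_gw, zpow_zero, one_smul]

lemma r3 (q : F) (k l : ℕ) :
    Rf q k (l+1) = lmul false (Sf q k (l+1)) + q^2 • lmul false (Pf q k l) := by
  unfold Pf Rf Sf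
  conv_lhs => rw [altX_eq, gtw_eq, sh_cons]
  rw [← altX_eq, ← gtw_eq, wsum_altX_f, zpow_p2]

lemma r4 (q : F) (k l : ℕ) :
    Sf q (k+1) (l+1) = lmul true (Rf q k (l+1)) + lmul false (Qf q (k+1) l) := by
  unfold Qf Rf Sf
  conv_lhs => rw [gw_eq, gtw_eq, sh_cons]
  rw [← gw_eq, ← gtw_eq, wsum_gw, zpow_zero, one_smul]

lemma r5a (q : F) (l : ℕ) : Qf q 0 l = Finsupp.single (altY l) 1 := by
  unfold Qf; show sh q [] _ = _; rw [sh_nil]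
lemma r5b (q : F) (k : ℕ) : Rf q k 0 = Finsupp.single (altX k) 1 := by
  unfold Rf; rw [altX_eq]; show sh q _ [] = _; rw [sh_cons_nil, ← altX_eq]
lemma r5c (q : F) (l : ℕ) : Sf q 0 l = Finsupp.single (gtw l) 1 := by
  unfold Sf; show sh q [] _ = _; rw [sh_nil]
lemma r5d (q : F) (k : ℕ) : Sf q k 0 = Finsupp.single (gw k) 1 := by
  unfold Sf
  match k with
  | 0 => show sh q [] [] = _; rw [sh_nil]; rfl
  | k+1 => rw [gw_eq]; show sh q _ [] = _; rw [sh_cons_nil, ← gw_eq]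

lemma sg_Pf (q : F) (k l : ℕ) : sg (Pf q k l) = sh q (altY k) (altX l) := by
  unfold Pf
  rw [sg_sh q ((altX k).length + (altY l).length) _ _ le_rfl, map_not_altX, map_not_altY]
lemma sg_Qf (q : F) (k l : ℕ) : sg (Qf q k l) = sh q (gtw k) (altX l) := by
  unfold Qf
  rw [sg_sh q ((gw k).length + (altY l).length) _ _ le_rfl, map_not_gw, map_not_altY]
end PQRS
section Boundary
variable {F : Type*} [Field F]

lemma p0 (q : F) : Pf q 0 0 =
    Finsupp.single (gtw 1) 1 + (q^2)⁻¹ • Finsupp.single (gw 1) 1 := by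
  rw [r1, r5a, r5b]
  show lmul false (Finsupp.single (true :: gtw 0) 1) + _ • lmul true (Finsupp.single (false :: gw 0) 1) = _
  rw [lmul_single, lmul_single]
  rfl

lemma p1 (q : F) (l : ℕ) : Pf q (l+1) 0 =
    lmul false (lmul true (Pf q l 0)) + Finsupp.single (false::true::gw (l+1)) 1
      + (q^2)⁻¹ • Finsupp.single (gw (l+1+1)) 1 := by
  rw [r1, r2, r5b, r5d]
  simp only [lmul_add, lmul_smul, lmul_single]
  rw [gw_eq (l+1)]

lemma p2 (q : F) (hq : q ≠ 0) (l : ℕ) : Pf q 0 (l+1) =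
    Finsupp.single (gtw (l+1+1)) 1 + (q^2)⁻¹ • Finsupp.single (true::false::gtw (l+1)) 1
      + lmul true (lmul false (Pf q 0 l)) := by
  have h2 : (q:F)^2 ≠ 0 := pow_ne_zero 2 hq
  rw [r1, r5a, r3, r5c]
  simp only [lmul_add, lmul_smul, lmul_single, smul_add, smul_smul, inv_mul_cancel₀ h2, one_smul]
  rw [gtw_eq (l+1), add_assoc]

lemma s1 (q : F) (l : ℕ) : Sf q (l+1) 1 =
    lmul true (lmul false (Sf q l 1)) + q^2 • lmul true (lmul false (Pf q l 0))
      + lmul false (lmul true (Pf q l 0)) + Finsupp.single (false::true::gw (l+1)) 1 := by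
  have h := r4 q l 0
  norm_num at h
  rw [h, r3, r2, r5d, lmul_add, lmul_add, lmul_smul, lmul_single, lmul_single]
  abel

lemma s2 (q : F) (l : ℕ) : Sf q 1 (l+1) =
    Finsupp.single (true::false::gtw (l+1)) 1 + q^2 • lmul true (lmul false (Pf q 0 l))
      + lmul false (lmul true (Pf q 0 l)) + lmul false (lmul true (Sf q 1 l)) := by
  have h := r4 q 0 l
  have h' := r2 q 0 l
  norm_num at h h'
  rw [h, r3, r5c, h']
  simp only [lmul_add, lmul_smul, lmul_single]
  abel

lemma B1 (q : F) (hq : q ≠ 0) : ∀ l : ℕ, sg (Pf q 0 l) =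
    Pf q l 0 + (1 - (q^2)⁻¹) • (Finsupp.single (gw (l+1)) 1 - Finsupp.single (gtw (l+1)) 1) := by
  intro l
  induction l with
  | zero =>
    rw [p0, sg_add, sg_smul, sg_single, sg_single, map_not_gtw, map_not_gw]
    simp only [Nat.zero_add]
    match_scalars <;> ring
  | succ l ih =>
    rw [p2 q hq, p1, sg_add, sg_add, sg_smul, sg_single, sg_single, sg_lmul, sg_lmul, ih]
    simp only [List.map_cons, Bool.not_false, Bool.not_true, map_not_gtw, map_not_gw]
    simp only [lmul_add, lmul_sub, lmul_smul, lmul_single]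
    simp only [gw_succ, gtw_succ]
    match_scalars <;> ring
end Boundary
section Boundary2
variable {F : Type*} [Field F]

lemma NB (q : F) (hq : q ≠ 0) : ∀ l : ℕ,
    Qf q 0 l + (q^2)⁻¹ • sg (Rf q 0 l) = Qf q l 0 + (q^2)⁻¹ • sg (Rf q l 0) := by
  intro l
  match l with
  | 0 => rfl
  | l+1 =>
    have h2 := r2 q l 0
    rw [r5a, r3 q 0 l, r5c, h2, r5b, r5d]
    simp only [sg_add, sg_smul, sg_lmul, sg_single, map_not_gtw, map_not_altX, Bool.not_false]
    rw [B1 q hq l]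
    simp only [lmul_add, lmul_sub, lmul_smul, lmul_single, smul_add, smul_sub, smul_smul]
    simp only [altY_eq, gw_succ, gtw_succ]
    match_scalars <;> (field_simp; try ring)

lemma B2 (q : F) (hq : q ≠ 0) : ∀ l : ℕ,
    sg (Sf q 1 l) + q^2 • Pf q 0 l + sg (Pf q 0 l)
      = Sf q l 1 + q^2 • Pf q l 0 + sg (Pf q l 0) := by
  intro l
  induction l with
  | zero =>
    rw [r5d, sg_single, map_not_gw, r5c]
  | succ l ih =>
    have hS : sg (Sf q 1 l) = Sf q l 1 + q^2 • Pf q l 0 + sg (Pf q l 0)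
        - q^2 • Pf q 0 l - sg (Pf q 0 l) := by rw [← ih]; abel
    rw [s2, p2 q hq l, p1, s1]
    simp only [sg_add, sg_smul, sg_lmul, sg_single, map_not_gw, map_not_gtw,
      List.map_cons, Bool.not_false, Bool.not_true]
    rw [hS, B1 q hq l]
    simp only [lmul_add, lmul_sub, lmul_smul, lmul_single, smul_add, smul_sub, smul_smul]
    simp only [gw_succ, gtw_succ]
    match_scalars <;> (field_simp; try ring)

lemma VB (q : F) (hq : q ≠ 0) : ∀ l : ℕ,
    Rf q 0 (l+1) + sg (Qf q 1 l) = Rf q l 1 + sg (Qf q (l+1) 0) := by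
  intro l
  have h1 := r2 q 0 l
  have h2 := r3 q l 0
  norm_num at h1 h2
  have hS : sg (Sf q 1 l) = Sf q l 1 + q^2 • Pf q l 0 + sg (Pf q l 0)
      - q^2 • Pf q 0 l - sg (Pf q 0 l) := by rw [← B2 q hq l]; abel
  rw [r3 q 0 l, r5c, h1, h2, r2 q l 0, r5d]
  simp only [sg_add, sg_smul, sg_lmul, sg_single, map_not_gw, map_not_gtw,
    List.map_cons, Bool.not_false, Bool.not_true]
  rw [hS, B1 q hq l]
  simp only [lmul_add, lmul_sub, lmul_smul, lmul_single, smul_add, smul_sub, smul_smul]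
  simp only [gw_succ, gtw_succ]
  match_scalars <;> (field_simp; try ring)
end Boundary2
section Interior
variable {F : Type*} [Field F]

def NL (q : F) (k l : ℕ) : V F := Qf q k l + (q^2)⁻¹ • sg (Rf q k l)
def VL (q : F) (k l : ℕ) : V F := Rf q k (l+1) + sg (Qf q (k+1) l)

lemma E1 (q : F) (hq : q ≠ 0) (k l : ℕ) : NL q (k+1) (l+1) =
    lmul true (lmul false (NL q k (l+1) + NL q (k+1) l))
      + (1 + (q^2)⁻¹) • lmul true (lmul true (VL q k l)) := by
  unfold NL VL
  rw [r2 q k (l+1), r3 q (k+1) l, r4 q k l, r1 q k (l+1), r1 q (k+1) l]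
  simp only [sg_add, sg_smul, sg_lmul, Bool.not_false, Bool.not_true]
  simp only [lmul_add, lmul_smul, smul_add, smul_smul]
  match_scalars <;> (field_simp; try ring)

lemma E2 (q : F) (hq : q ≠ 0) (k l : ℕ) : VL q (k+1) (l+1) =
    lmul false (lmul false ((1 + q^2) • NL q (k+1) (l+1)))
      + lmul false (lmul true (VL q k (l+1) + VL q (k+1) l)) := by
  unfold NL VL
  rw [r3 q (k+1) (l+1), r4 q k (l+1), r2 q (k+1) (l+1), r4 q (k+1) l, r1 q (k+1) (l+1)]
  simp only [sg_add, sg_smul, sg_lmul, Bool.not_false, Bool.not_true]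
  simp only [lmul_add, lmul_smul, smul_add, smul_smul]
  match_scalars <;> (field_simp; try ring)

lemma mainNV (q : F) (hq : q ≠ 0) : ∀ n : ℕ,
    (∀ k l, k + l = n → NL q k l = NL q l k) ∧ (∀ k l, k + l = n → VL q k l = VL q l k) := by
  intro n
  induction n using Nat.strong_induction_on with
  | _ n IH =>
    have hN : ∀ k l, k + l = n → NL q k l = NL q l k := by
      intro k l hn
      cases k with
      | zero => exact NB q hq l
      | succ k =>
        cases l with
        | zero => exact (NB q hq (k+1)).symm
        | succ l =>
          have h1 : NL q k (l+1) = NL q (l+1) k := (IH (k+(l+1)) (by omega)).1 k (l+1) rfl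
          have h2 : NL q (k+1) l = NL q l (k+1) := (IH ((k+1)+l) (by omega)).1 (k+1) l rfl
          have h3 : VL q k l = VL q l k := (IH (k+l) (by omega)).2 k l rfl
          rw [E1 q hq, E1 q hq, h1, h2, h3, add_comm (NL q (l+1) k)]
    refine ⟨hN, ?_⟩
    intro k l hn
    cases k with
    | zero => exact VB q hq l
    | succ k =>
      cases l with
      | zero => exact (VB q hq (k+1)).symm
      | succ l =>
        have h0 : NL q (k+1) (l+1) = NL q (l+1) (k+1) := hN (k+1) (l+1) (by omega)
        have h1 : VL q k (l+1) = VL q (l+1) k := (IH (k+(l+1)) (by omega)).2 k (l+1) rfl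
        have h2 : VL q (k+1) l = VL q l (k+1) := (IH ((k+1)+l) (by omega)).2 (k+1) l rfl
        rw [E2 q hq, E2 q hq, h0, h1, h2, add_comm (VL q (l+1) k)]

lemma keyM (q : F) (k l : ℕ) : Pf q k l + sg (Pf q k l)
    = lmul false (NL q k l) + lmul true (sg (NL q k l)) := by
  unfold NL
  rw [r1 q k l]
  simp only [sg_add, sg_smul, sg_lmul, sg_sg, Bool.not_false, Bool.not_true]
  simp only [lmul_add, lmul_smul]
  abel

lemma Mkl (q : F) (hq : q ≠ 0) (k l : ℕ) :
    Pf q k l + sg (Pf q k l) = Pf q l k + sg (Pf q l k) := by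
  rw [keyM, keyM, (mainNV q hq (k+l)).1 k l rfl]
end Interior

section Final
variable {F : Type*} [Field F]

lemma st_single (q : F) (u v : Wd) :
    st q (Finsupp.single u 1) (Finsupp.single v 1) = sh q u v := by
  unfold st
  rw [Finsupp.sum_single_index (by simp), Finsupp.sum_single_index (by simp)]
  simp

lemma sh_swap (q : F) (k l : ℕ) : sh q (altY k) (altX l) = sg (Pf q k l) := (sg_Pf q k l).symm
end Final


/-- `[W_{−k}, W_{ℓ+1}] + [W_{k+1}, W_{−ℓ}] = 0`. -/
theorem stmt_5 {F : Type*} [Field F] (q : F) (hq : q ≠ 0)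
    (hq' : ∀ n : ℕ, 0 < n → q ^ n ≠ 1) (k l : ℕ) :
    (st q (Wm F k) (Wp F l) - st q (Wp F l) (Wm F k))
      + (st q (Wp F k) (Wm F l) - st q (Wm F l) (Wp F k)) = 0 := by
  unfold Wm Wp
  rw [st_single, st_single, st_single, st_single, sh_swap, sh_swap]
  show (Pf q k l - sg (Pf q l k)) + (sg (Pf q k l) - Pf q l k) = 0
  rw [sub_add_sub_comm, Mkl q hq k l, add_comm (sg (Pf q l k))]
  exact sub_self _
end
end

section
/- In the q-shuffle algebra V, for all n ∈ ℕ: Σ_{k=0}^{n} q^{2k−n} W_{−k} ⋆ W_{k−n} = Σ_{k=0}^{n} q^{n−2k} W_{−k} ⋆ W_{k−n} = q [2]_q^{n+1} x (xy+yx)^n x, where the right-hand side is computed in the free (concatenation) algebra. -/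
noncomputable section

variable {F : Type*} [Field F]

/-!
Write `W_{-k} = x G_k` and `G_{k+1} = y W_{-k}` with `G_k = (yx)^k`, and for a weight `t` put
`A_n = Σ_{i+j=n} t^{i-j} W_{-i} ⋆ W_{-j}`, and likewise `B_n`, `C_n`, `D_n` with `G_i ⋆ W_{-j}`,
`W_{-i} ⋆ G_j`, `G_i ⋆ G_j`. Peeling off first letters with Rosso's recursion gives the linear
system `A_n = x B_n + q² x C_n`, `B_{n+1} = t y A_n + x D_{n+1}`,
`C_{n+1} = t⁻¹q⁻² y A_n + x D_{n+1}`, `D_{n+1} = t⁻¹ y B_n + t y C_n`. When `t + t⁻¹ = [2]_q` it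
is solved by `A_n = q [2]_q^{n+1} x (xy+yx)^n x` and `D_{n+1} = [2]_q^{n+1} y (xy+yx)^n x`, and the
two sums of the theorem are `A_n` for `t = q` and for `t = q⁻¹`.
-/

namespace QShuffle

open Finset

lemma zpow_succ_sub_natCast {G : Type*} [GroupWithZero G] {t : G} (ht : t ≠ 0) (i j : ℕ) :
    t ^ (((i + 1 : ℕ) : ℤ) - j) = t * t ^ ((i : ℤ) - j) := by
  rw [← zpow_one_add₀ ht]
  push_cast
  ring_nf

lemma zpow_sub_natCast_succ {G : Type*} [GroupWithZero G] {t : G} (ht : t ≠ 0) (i j : ℕ) :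
    t ^ ((i : ℤ) - ((j + 1 : ℕ) : ℤ)) = t⁻¹ * t ^ ((i : ℤ) - j) := by
  rw [← zpow_neg_one, ← zpow_add₀ ht]
  push_cast
  ring_nf

lemma altX_eq_cons (k : ℕ) : altX k = false :: gw k := by
  induction k with
  | zero => rfl
  | succ k ih => simp [altX, gw, ih]

lemma gw_succ (k : ℕ) : gw (k + 1) = true :: altX k := by
  rw [gw, altX_eq_cons]

lemma wsum_cons (a : Bool) (u : Wd) (b : Bool) : wsum (a :: u) b = pr a b + wsum u b := by
  simp [wsum]

lemma wsum_altX_false (k : ℕ) : wsum (altX k) false = 2 := by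
  induction k with
  | zero => rfl
  | succ k ih => simp [altX, wsum_cons, ih, pr]

lemma wsum_altX_true (k : ℕ) : wsum (altX k) true = -2 := by
  induction k with
  | zero => rfl
  | succ k ih => simp [altX, wsum_cons, ih, pr]

lemma wsum_gw (k : ℕ) (b : Bool) : wsum (gw k) b = 0 := by
  induction k with
  | zero => rfl
  | succ k ih => cases b <;> simp [gw, wsum_cons, ih, pr]

lemma lmul_add (a : Bool) (f g : V F) : lmul a (f + g) = lmul a f + lmul a g :=
  Finsupp.mapDomain_add

lemma lmul_smul (a : Bool) (c : F) (f : V F) : lmul a (c • f) = c • lmul a f :=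
  Finsupp.mapDomain_smul c f

lemma lmul_single (a : Bool) (w : Wd) (c : F) :
    lmul a (Finsupp.single w c) = Finsupp.single (a :: w) c :=
  Finsupp.mapDomain_single

lemma lmul_sum {ι : Type*} (a : Bool) (s : Finset ι) (f : ι → V F) :
    lmul a (∑ i ∈ s, f i) = ∑ i ∈ s, lmul a (f i) :=
  Finsupp.mapDomain_finsetSum

variable (q : F)

lemma sh_nil_left (v : Wd) : sh q [] v = Finsupp.single v 1 := by
  rw [sh]

lemma sh_nil_right (u : Wd) : sh q u [] = Finsupp.single u 1 := by
  cases u <;> rw [sh]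

lemma sh_altX_altX (k m : ℕ) :
    sh q (altX k) (altX m) =
      lmul false (sh q (gw k) (altX m)) + q ^ 2 • lmul false (sh q (altX k) (gw m)) := by
  conv_lhs => rw [altX_eq_cons k, altX_eq_cons m, sh]
  rw [← altX_eq_cons, ← altX_eq_cons, wsum_altX_false, zpow_ofNat]

lemma sh_gw_succ_altX (k m : ℕ) :
    sh q (gw (k + 1)) (altX m) =
      lmul true (sh q (altX k) (altX m)) + lmul false (sh q (gw (k + 1)) (gw m)) := by
  conv_lhs => rw [gw_succ k, altX_eq_cons m, sh]
  rw [← gw_succ, ← altX_eq_cons, wsum_gw, zpow_zero, one_smul]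

lemma sh_altX_gw_succ (k m : ℕ) :
    sh q (altX k) (gw (m + 1)) =
      lmul false (sh q (gw k) (gw (m + 1))) + (q ^ 2)⁻¹ • lmul true (sh q (altX k) (altX m)) := by
  conv_lhs => rw [altX_eq_cons k, gw_succ m, sh]
  rw [← altX_eq_cons, ← gw_succ, wsum_altX_true, zpow_neg, zpow_ofNat]

lemma sh_gw_succ_gw_succ (k m : ℕ) :
    sh q (gw (k + 1)) (gw (m + 1)) =
      lmul true (sh q (altX k) (gw (m + 1))) + lmul true (sh q (gw (k + 1)) (altX m)) := by
  conv_lhs => rw [gw_succ k, gw_succ m, sh]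
  rw [← gw_succ, ← gw_succ, wsum_gw, zpow_zero, one_smul]

def weightedShSum (t : F) (u v : ℕ → Wd) (n : ℕ) : V F :=
  ∑ p ∈ antidiagonal n, t ^ ((p.1 : ℤ) - p.2) • sh q (u p.1) (v p.2)

variable {q}

lemma weightedShSum_zero (t : F) (u v : ℕ → Wd) :
    weightedShSum q t u v 0 = sh q (u 0) (v 0) := by
  simp [weightedShSum]

lemma weightedShSum_altX_altX (t : F) (n : ℕ) :
    weightedShSum q t altX altX n =
      lmul false (weightedShSum q t gw altX n) +
        q ^ 2 • lmul false (weightedShSum q t altX gw n) := by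
  simp only [weightedShSum, lmul_sum, smul_sum, ← sum_add_distrib, sh_altX_altX, smul_add,
    lmul_smul, smul_comm (q ^ 2)]

section

variable {t : F} (ht : t ≠ 0)
include ht

lemma weightedShSum_gw_altX_succ (n : ℕ) :
    weightedShSum q t gw altX (n + 1) =
      t • lmul true (weightedShSum q t altX altX n) +
        lmul false (weightedShSum q t gw gw (n + 1)) := by
  simp only [weightedShSum, Nat.sum_antidiagonal_succ, lmul_add, lmul_sum, smul_sum,
    sh_gw_succ_altX, smul_add, lmul_smul, sum_add_distrib, smul_smul, zpow_succ_sub_natCast ht]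
  rw [gw, sh_nil_left, sh_nil_left, lmul_single, ← altX_eq_cons]
  abel

lemma weightedShSum_altX_gw_succ (n : ℕ) :
    weightedShSum q t altX gw (n + 1) =
      (t * q ^ 2)⁻¹ • lmul true (weightedShSum q t altX altX n) +
        lmul false (weightedShSum q t gw gw (n + 1)) := by
  simp only [weightedShSum, Nat.sum_antidiagonal_succ', lmul_add, lmul_sum, smul_sum,
    sh_altX_gw_succ, smul_add, lmul_smul, sum_add_distrib, smul_smul, zpow_sub_natCast_succ ht,
    mul_inv, mul_right_comm _ _ (q ^ 2)⁻¹]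
  rw [gw, sh_nil_right, sh_nil_right, lmul_single, ← altX_eq_cons]
  abel

lemma weightedShSum_gw_gw_succ (n : ℕ) :
    weightedShSum q t gw gw (n + 1) =
      t⁻¹ • lmul true (weightedShSum q t gw altX n) +
        t • lmul true (weightedShSum q t altX gw n) := by
  simp only [weightedShSum]
  cases n with
  | zero =>
    simp [Nat.sum_antidiagonal_succ, gw_succ, gw.eq_1, sh_nil_left, sh_nil_right, lmul_single]
  | succ n =>
    rw [Nat.sum_antidiagonal_succ, Nat.sum_antidiagonal_succ', Nat.sum_antidiagonal_succ,
      Nat.sum_antidiagonal_succ']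
    simp only [sh_gw_succ_gw_succ, lmul_add, lmul_smul, lmul_sum, smul_sum, smul_add, smul_smul,
      sum_add_distrib, zpow_succ_sub_natCast ht, zpow_sub_natCast_succ ht, inv_mul_cancel_left₀ ht,
      mul_inv_cancel_left₀ ht, gw.eq_1, sh_nil_left, sh_nil_right, lmul_single, ← gw_succ]
    abel

end

lemma cm_add_left (f g h : V F) : cm (f + g) h = cm f h + cm g h := by
  rw [cm, cm, cm, Finsupp.sum_add_index']
  · simp
  · intro u c₁ c₂
    simp only [add_mul, Finsupp.single_add, Finsupp.sum_add]

lemma cm_lmul_left (a : Bool) (f g : V F) : cm (lmul a f) g = lmul a (cm f g) := by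
  simp only [cm, lmul, Finsupp.sum_mapDomain_index_inj List.cons_injective,
    Finsupp.mapDomain_sum, Finsupp.mapDomain_single, List.cons_append]

lemma cm_single_nil_left (g : V F) : cm (Finsupp.single [] 1) g = g := by
  rw [cm, Finsupp.sum_single_index (by simp)]
  simp only [List.nil_append, one_mul, Finsupp.sum_single]

lemma cm_Wm_zero_left (g : V F) : cm (Wm F 0) g = lmul false g := by
  rw [Wm, altX, ← lmul_single, cm_lmul_left, cm_single_nil_left]

lemma cm_Gt_one_add_Gn_one_left (g : V F) :
    cm (Gt F 1 + Gn F 1) g = lmul false (lmul true g) + lmul true (lmul false g) := by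
  simp only [Gt, Gn, gtw, gw, ← lmul_single, cm_add_left, cm_lmul_left, cm_single_nil_left]

variable (F) in
-- `(xy + yx)ⁿ x`
def xyyxPowX (n : ℕ) : V F := cm (cpow (Gt F 1 + Gn F 1) n) (Wm F 0)

lemma xyyxPowX_zero : xyyxPowX F 0 = Finsupp.single [false] 1 :=
  cm_single_nil_left _

lemma xyyxPowX_succ (n : ℕ) :
    xyyxPowX F (n + 1) =
      lmul false (lmul true (xyyxPowX F n)) + lmul true (lmul false (xyyxPowX F n)) := by
  rw [xyyxPowX, cpow, cm_Gt_one_add_Gn_one_left, cm_add_left, cm_lmul_left, cm_lmul_left,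
    cm_lmul_left, cm_lmul_left, xyyxPowX]

theorem weightedShSum_closedForm {t : F} (hq : q ≠ 0) (ht : t ≠ 0) (hqt : t + t⁻¹ = q + q⁻¹)
    (n : ℕ) :
    weightedShSum q t altX altX n = (q * (q + q⁻¹) ^ (n + 1)) • lmul false (xyyxPowX F n) ∧
      weightedShSum q t gw gw (n + 1) = (q + q⁻¹) ^ (n + 1) • lmul true (xyyxPowX F n) := by
  induction n with
  | zero =>
    have hB : weightedShSum q t gw altX 0 = xyyxPowX F 0 := by
      rw [weightedShSum_zero, gw.eq_1, sh_nil_left, xyyxPowX_zero, altX]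
    have hC : weightedShSum q t altX gw 0 = xyyxPowX F 0 := by
      rw [weightedShSum_zero, gw.eq_1, sh_nil_right, xyyxPowX_zero, altX]
    rw [weightedShSum_altX_altX, weightedShSum_gw_gw_succ ht, hB, hC]
    constructor <;> match_scalars <;> grind
  | succ n ih =>
    obtain ⟨hA, hD⟩ := ih
    rw [weightedShSum_altX_altX, weightedShSum_gw_gw_succ ht, weightedShSum_gw_altX_succ ht,
      weightedShSum_altX_gw_succ ht, hA, hD, xyyxPowX_succ]
    simp only [lmul_add, lmul_smul]
    constructor <;> match_scalars <;> grind

lemma st_single_single (u v : Wd) (a b : F) :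
    st q (Finsupp.single u a) (Finsupp.single v b) = (a * b) • sh q u v := by
  simp [st, Finsupp.sum_single_index]

lemma sum_range_st_Wm_eq_weightedShSum (t : F) (n : ℕ) :
    ∑ k ∈ range (n + 1), t ^ (2 * (k : ℤ) - n) • st q (Wm F k) (Wm F (n - k)) =
      weightedShSum q t altX altX n := by
  rw [weightedShSum, Nat.sum_antidiagonal_eq_sum_range_succ
    (fun i j => t ^ ((i : ℤ) - j) • sh q (altX i) (altX j))]
  refine sum_congr rfl fun k hk => ?_
  rw [Wm, Wm, st_single_single, one_mul, one_smul, Nat.cast_sub (mem_range_succ_iff.mp hk)]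
  ring_nf

end QShuffle

open QShuffle in
theorem stmt_11_general {F : Type*} [Field F] (q : F) (hq : q ≠ 0) (n : ℕ) :
    (∑ k ∈ Finset.range (n + 1),
        q ^ (2 * (k : ℤ) - (n : ℤ)) • st q (Wm F k) (Wm F (n - k)))
      = (∑ k ∈ Finset.range (n + 1),
          q ^ ((n : ℤ) - 2 * (k : ℤ)) • st q (Wm F k) (Wm F (n - k))) ∧
    (∑ k ∈ Finset.range (n + 1),
        q ^ (2 * (k : ℤ) - (n : ℤ)) • st q (Wm F k) (Wm F (n - k)))
      = (q * (q + q⁻¹) ^ (n + 1)) •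
          cm (Wm F 0) (cm (cpow (Gt F 1 + Gn F 1) n) (Wm F 0)) := by
  have h_inv_weight : ∀ k : ℕ, q ^ ((n : ℤ) - 2 * k) = q⁻¹ ^ (2 * (k : ℤ) - n) := fun k => by
    rw [inv_zpow', neg_sub]
  have hq_inv : q⁻¹ + q⁻¹⁻¹ = q + q⁻¹ := by rw [inv_inv, add_comm]
  simp only [h_inv_weight, sum_range_st_Wm_eq_weightedShSum]
  rw [(weightedShSum_closedForm hq hq rfl n).1,
    (weightedShSum_closedForm hq (inv_ne_zero hq) hq_inv n).1, cm_Wm_zero_left, xyyxPowX]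
  exact ⟨rfl, rfl⟩

/-- `Σ_{k=0}^n q^{2k−n} W_{−k} ⋆ W_{k−n} = Σ_{k=0}^n q^{n−2k} W_{−k} ⋆ W_{k−n}
= q [2]_q^{n+1} x(xy+yx)^n x`. -/
theorem stmt_11 {F : Type*} [Field F] (q : F) (hq : q ≠ 0)
    (hq' : ∀ n : ℕ, 0 < n → q ^ n ≠ 1) (n : ℕ) :
    (∑ k ∈ Finset.range (n + 1),
        q ^ (2 * (k : ℤ) - (n : ℤ)) • st q (Wm F k) (Wm F (n - k)))
      = (∑ k ∈ Finset.range (n + 1),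
          q ^ ((n : ℤ) - 2 * (k : ℤ)) • st q (Wm F k) (Wm F (n - k))) ∧
    (∑ k ∈ Finset.range (n + 1),
        q ^ (2 * (k : ℤ) - (n : ℤ)) • st q (Wm F k) (Wm F (n - k)))
      = (q * (q + q⁻¹) ^ (n + 1)) •
          cm (Wm F 0) (cm (cpow (Gt F 1 + Gn F 1) n) (Wm F 0)) :=
  stmt_11_general q hq n
end
end
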